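/- Let R be a commutative ring, φ : R → R a ring endomorphism, and Φ the restriction-of-scalars functor along φ. Given an R-module M and an R-linear map β : M → Φ(M), the direct limit M_∞ := colim(M → Φ(M) → Φ²(M) → ⋯) along the maps Φᵉ(β) satisfies Φ(M_∞) ≅ M_∞ compatibly with the structural map, i.e., M_∞ is a unit R[Θ; φ]-module, provided Φ commutes with direct limits (e.g., φ is flat, or more generally Φ is given by restriction of scalars which always commutes with colimits). -/

import Mathlib

open CategoryTheory CategoryTheory.Limits

variable {R : Type} [CommRing R]

/-- The tower `M, Φ(M), Φ²(M), …` of iterates of the restriction-of-scalars functor `Φ`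
along `φ` applied to `M`. -/
noncomputable def phiTower (φ : R →+* R) (M : ModuleCat R) : ℕ → ModuleCat R
  | 0 => M
  | e + 1 => (ModuleCat.restrictScalars φ).obj (phiTower φ M e)

/-- The transition maps `Φᵉ(β) : Φᵉ(M) ⟶ Φᵉ⁺¹(M)` of the tower. -/
noncomputable def phiTowerMap (φ : R →+* R) (M : ModuleCat R)
    (β : M ⟶ (ModuleCat.restrictScalars φ).obj M) :
    ∀ e : ℕ, phiTower φ M e ⟶ phiTower φ M (e + 1)
  | 0 => β
  | e + 1 => (ModuleCat.restrictScalars φ).map (phiTowerMap φ M β e)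

/-! Applying `Φ` to the tower `M → Φ(M) → Φ²(M) → ⋯` gives the same tower with its first term
removed. Since `Φ` preserves sequential colimits, `Φ(M_∞)` is the colimit of that shifted tower,
and since `n ↦ n + 1` is final in `ℕ`, dropping the first term does not change the colimit. -/

namespace Nat

def succFunctor : ℕ ⥤ ℕ := Monotone.functor (f := (· + 1)) fun _ _ h => Nat.succ_le_succ h

instance succFunctor_final : succFunctor.Final :=
  (Monotone.final_functor_iff _).2 fun n => ⟨n, n.le_succ⟩

end Nat

namespace CategoryTheory

variable {C : Type*} [Category C]

noncomputable def Functor.ofSequenceCompIsoSucc {X : ℕ → C} (f : ∀ n, X n ⟶ X (n + 1))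
    (Φ : C ⥤ C) (e : ∀ n, Φ.obj (X n) ≅ X (n + 1))
    (he : ∀ n, Φ.map (f n) ≫ (e (n + 1)).hom = (e n).hom ≫ f (n + 1)) :
    ofSequence f ⋙ Φ ≅ Nat.succFunctor ⋙ ofSequence f :=
  let τ : ofSequence f ⋙ Φ ⟶ Nat.succFunctor ⋙ ofSequence f :=
    NatTrans.ofSequence (fun n => (e n).hom) fun n => by
      simp only [comp_map, ofSequence_map_homOfLE_succ]
      exact (he n).trans (congrArg _ (ofSequence_map_homOfLE_succ f (n + 1)).symm)
  NatIso.ofComponents e fun g => τ.naturality g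

namespace Limits

variable (Φ : C ⥤ C) (F : ℕ ⥤ C) [HasColimit F] [PreservesColimit F Φ]
  (i : F ⋙ Φ ≅ Nat.succFunctor ⋙ F)

noncomputable def colimitIsoOfCompIsoSucc : Φ.obj (colimit F) ≅ colimit F :=
  preservesColimitIso Φ F ≪≫ HasColimit.isoOfNatIso i ≪≫
    Functor.Final.colimitIso Nat.succFunctor F

lemma map_ι_colimitIsoOfCompIsoSucc_hom (e : ℕ) :
    Φ.map (colimit.ι F e) ≫ (colimitIsoOfCompIsoSucc Φ F i).hom =
      i.hom.app e ≫ colimit.ι F (e + 1) := by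
  simp only [colimitIsoOfCompIsoSucc, Iso.trans_hom, ι_preservesColimitIso_hom_assoc,
    HasColimit.isoOfNatIso_ι_hom_assoc, Functor.Final.ι_colimitIso_hom]
  rfl

end Limits

end CategoryTheory

/-- Let `φ : R → R` be a ring endomorphism, `Φ` restriction of scalars along
`φ`, `M` an `R`-module and `β : M → Φ(M)` an `R`-linear map. If `Φ` commutes with
direct limits, then the direct limit `M_∞ = colim (M → Φ(M) → Φ²(M) → ⋯)` satisfies
`Φ(M_∞) ≅ M_∞` compatibly with the structure maps of the colimit; i.e. `M_∞` is a unit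
`R[Θ; φ]`-module. -/
theorem colimit_phi_tower_is_unit (φ : R →+* R) (M : ModuleCat R)
    (β : M ⟶ (ModuleCat.restrictScalars φ).obj M)
    [PreservesColimitsOfShape ℕ (ModuleCat.restrictScalars φ)] :
    ∃ α : (ModuleCat.restrictScalars φ).obj
        (colimit (Functor.ofSequence (phiTowerMap φ M β))) ≅
        colimit (Functor.ofSequence (phiTowerMap φ M β)),
      ∀ e : ℕ,
        (ModuleCat.restrictScalars φ).map
            (colimit.ι (Functor.ofSequence (phiTowerMap φ M β)) e) ≫ α.hom =
          colimit.ι (Functor.ofSequence (phiTowerMap φ M β)) (e + 1) := by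
  -- `Φ(Φᵉ(M)) = Φᵉ⁺¹(M)` and `Φ(Φᵉ(β)) = Φᵉ⁺¹(β)` hold definitionally.
  let shift := Functor.ofSequenceCompIsoSucc (phiTowerMap φ M β) (ModuleCat.restrictScalars φ)
    (fun _ => Iso.refl _) fun _ => (Category.comp_id _).trans (Category.id_comp _).symm
  exact ⟨colimitIsoOfCompIsoSucc _ _ shift,
    fun e => (map_ι_colimitIsoOfCompIsoSucc_hom _ _ shift e).trans (Category.id_comp _)⟩
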